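/- (L^∞ bound) For every d > 0 there exists a constant C_d > 0, depending only on N, p, s and d, with the following property: if Ω ⊂ ℝ^N is a bounded open set with diameter at most d, K > 0, and u ∈ W^{s,p}_0(Ω) satisfies, weakly in Ω, both (−Δ)^s_p u ≤ K and (−Δ)^s_p u ≥ −K, then ‖u‖_{L^∞(ℝ^N)} ≤ (C_d · K)^{1/(p−1)}. -/

import Mathlib

/-!
Test `(-Δ)^s_p u ≤ K` with `v = (u - m)⁺`, `m = (C K)^{1/(p-1)}`. Since `t ↦ t^⟨p-1⟩` and
`t ↦ (t - m)⁺` are both nondecreasing, every pair `(x, y)` contributes nonnegatively to the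
pairing `⟨(-Δ)^s_p u, v⟩`. Pairs with `x ∈ Ω` and `y` in a ball `B` of radius `d / 2` outside `Ω`
but within distance `4 d` of it contribute at least `m^{p-1} v(x) / (4 d)^{N+ps}`, because
`u(y) = 0`. Integrating over `Ω × B` gives `2 K ∫ v ≤ ⟨(-Δ)^s_p u, v⟩ ≤ K ∫ v`, so `v = 0`,
i.e. `u ≤ m` a.e. The lower bound follows by applying this to `-u`.
-/

open MeasureTheory Metric Set Filter Topology

noncomputable section

/-- Signed power `a^⟨q⟩ = |a|^(q-1) · a`. -/
def spow (a q : ℝ) : ℝ := |a| ^ (q - 1) * a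

/-- Euclidean space `ℝ^N`. -/
abbrev Rn (N : ℕ) := EuclideanSpace ℝ (Fin N)

/-- The integrand of the Gagliardo seminorm. -/
def energyIntegrand (N : ℕ) (p s : ℝ) (φ : Rn N → ℝ) (z : Rn N × Rn N) : ℝ :=
  |φ z.1 - φ z.2| ^ p / ‖z.1 - z.2‖ ^ ((N : ℝ) + p * s)

/-- The integrand of the nonlinear pairing `(u, φ)`. -/
def gker (N : ℕ) (p s : ℝ) (u φ : Rn N → ℝ) (z : Rn N × Rn N) : ℝ :=
  spow (u z.1 - u z.2) (p - 1) * (φ z.1 - φ z.2) / ‖z.1 - z.2‖ ^ ((N : ℝ) + p * s)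

/-- `φ ∈ W^{s,p}_0(Ω)`. -/
def memW0 (N : ℕ) (p s : ℝ) (Ω : Set (Rn N)) (φ : Rn N → ℝ) : Prop :=
  MemLp φ (ENNReal.ofReal p) volume ∧
  Integrable (energyIntegrand N p s φ) volume ∧
  ∀ᵐ x, x ∉ Ω → φ x = 0

/-- `u ∈ W̃^{s,p}(Ω)` (for bounded `Ω`). -/
def memWtilde (N : ℕ) (p s : ℝ) (Ω : Set (Rn N)) (u : Rn N → ℝ) : Prop :=
  AEStronglyMeasurable u volume ∧
  (∀ K : Set (Rn N), IsCompact K → IntegrableOn (fun x => |u x| ^ p) K) ∧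
  (∃ U : Set (Rn N), IsOpen U ∧ closure Ω ⊆ U ∧
     IntegrableOn (fun x => |u x| ^ p) U ∧
     IntegrableOn (energyIntegrand N p s u) (U ×ˢ U)) ∧
  Integrable (fun x => |u x| ^ (p - 1) / (1 + ‖x‖) ^ ((N : ℝ) + p * s))

/-- `u ∈ W̃^{s,p}_loc(Ω)`. -/
def memWtildeLoc (N : ℕ) (p s : ℝ) (Ω : Set (Rn N)) (u : Rn N → ℝ) : Prop :=
  ∀ Ω' : Set (Rn N), IsOpen Ω' → Bornology.IsBounded Ω' → Ω' ⊆ Ω → memWtilde N p s Ω' u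

/-- `u` is a weak solution of `(-Δ)^s_p u = f` in `Ω`. -/
def isWeakSol (N : ℕ) (p s : ℝ) (Ω : Set (Rn N)) (u f : Rn N → ℝ) : Prop :=
  ∀ Ω' : Set (Rn N), IsOpen Ω' → Bornology.IsBounded Ω' → Ω' ⊆ Ω →
    ∀ φ : Rn N → ℝ, memW0 N p s Ω' φ →
      (∫ z : Rn N × Rn N, gker N p s u φ z) = ∫ x in Ω', f x * φ x

/-- `(-Δ)^s_p u ≤ g` weakly in `Ω`. -/
def weakLE (N : ℕ) (p s : ℝ) (Ω : Set (Rn N)) (u g : Rn N → ℝ) : Prop :=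
  ∀ φ : Rn N → ℝ, memW0 N p s Ω φ → (∀ᵐ x, 0 ≤ φ x) →
    (∫ z : Rn N × Rn N, gker N p s u φ z) ≤ ∫ x in Ω, g x * φ x

/-- `(-Δ)^s_p u ≥ g` weakly in `Ω`. -/
def weakGE (N : ℕ) (p s : ℝ) (Ω : Set (Rn N)) (u g : Rn N → ℝ) : Prop :=
  ∀ φ : Rn N → ℝ, memW0 N p s Ω φ → (∀ᵐ x, 0 ≤ φ x) →
    (∫ x in Ω, g x * φ x) ≤ ∫ z : Rn N × Rn N, gker N p s u φ z

/-- The nonlocal tail. -/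
def tailF (N : ℕ) (p s : ℝ) (v : Rn N → ℝ) (x₀ : Rn N) (R : ℝ) : ℝ :=
  (R ^ (p * s) * ∫ y in {y : Rn N | R ≤ dist y x₀}, |v y| ^ (p - 1) / ‖x₀ - y‖ ^ ((N : ℝ) + p * s)) ^ (1 / (p - 1))




lemma spow_neg (a q : ℝ) : spow (-a) q = -spow a q := by
  simp only [spow, abs_neg]; ring

lemma rpow_sub_one_mul_self {a q : ℝ} (ha : 0 ≤ a) (hq : 0 < q) : a ^ (q - 1) * a = a ^ q := by
  rw [← Real.rpow_add_one' ha (by rw [sub_add_cancel]; exact hq.ne'), sub_add_cancel]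

lemma spow_of_nonneg {a : ℝ} (ha : 0 ≤ a) {q : ℝ} (hq : 0 < q) : spow a q = a ^ q := by
  rw [spow, abs_of_nonneg ha, rpow_sub_one_mul_self ha hq]

lemma abs_spow (a : ℝ) {q : ℝ} (hq : 0 < q) : |spow a q| = |a| ^ q := by
  rw [spow, abs_mul, abs_of_nonneg (Real.rpow_nonneg (abs_nonneg a) _),
    rpow_sub_one_mul_self (abs_nonneg a) hq]

lemma spow_mul_nonneg {a b : ℝ} (q : ℝ) (h : 0 ≤ a * b) : 0 ≤ spow a q * b := by
  rw [spow, mul_assoc]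
  exact mul_nonneg (Real.rpow_nonneg (abs_nonneg a) _) h

lemma measurable_spow (q : ℝ) : Measurable fun a : ℝ => spow a q :=
  (measurable_id.abs.pow_const _).mul measurable_id

lemma LipschitzWith.abs_sub_le {f : ℝ → ℝ} (hf : LipschitzWith 1 f) (a b : ℝ) :
    |f a - f b| ≤ |a - b| := by
  simpa [Real.dist_eq] using hf.dist_le_mul a b

lemma Monotone.sub_mul_sub_nonneg {f : ℝ → ℝ} (hf : Monotone f) (a b : ℝ) :
    0 ≤ (a - b) * (f a - f b) := by
  rcases le_total a b with h | h
  · exact mul_nonneg_of_nonpos_of_nonpos (by linarith) (sub_nonpos.mpr (hf h))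
  · exact mul_nonneg (by linarith) (sub_nonneg.mpr (hf h))

lemma lipschitzWith_posPart_sub (m : ℝ) : LipschitzWith 1 fun t : ℝ => (t - m)⁺ := by
  simpa [Function.comp_def] using
    lipschitzWith_posPart.comp (IsometryEquiv.subRight m).isometry.lipschitz

lemma monotone_posPart_sub (m : ℝ) : Monotone fun t : ℝ => (t - m)⁺ :=
  fun _ _ h => posPart_mono (sub_le_sub_right h m)

lemma ae_le_of_integral_posPart_sub_eq_zero {α : Type*} [MeasurableSpace α] {μ : Measure α}
    {u : α → ℝ} {m : ℝ} (hv : Integrable (fun x => (u x - m)⁺) μ)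
    (h : ∫ x, (u x - m)⁺ ∂μ = 0) : ∀ᵐ x ∂μ, u x ≤ m := by
  filter_upwards [(integral_eq_zero_iff_of_nonneg (fun x => posPart_nonneg _) hv).mp h]
    with x hx
  simpa using posPart_eq_zero.mp hx

lemma exists_ball_disjoint_within_dist {E : Type*} [NormedAddCommGroup E] [NormedSpace ℝ E]
    [Nontrivial E] {Ω : Set E} (hΩ : Bornology.IsBounded Ω) {d : ℝ} (hdiam : diam Ω ≤ d)
    (hd : 0 < d) :
    ∃ c : E, ∀ y ∈ ball c (d / 2), y ∉ Ω ∧ ∀ x ∈ Ω, dist x y ≤ 4 * d := by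
  rcases Ω.eq_empty_or_nonempty with rfl | ⟨x₀, hx₀⟩
  · exact ⟨0, fun _ _ => by simp⟩
  obtain ⟨w, hw⟩ := exists_norm_eq E (by positivity : (0 : ℝ) ≤ 5 * d / 2)
  have hnear : ∀ x ∈ Ω, dist x x₀ ≤ d := fun x hx =>
    (dist_le_diam_of_mem hΩ hx hx₀).trans hdiam
  refine ⟨x₀ + w, fun y hy => ?_⟩
  have hcy : dist y (x₀ + w) < d / 2 := hy
  have hc : dist (x₀ + w) x₀ = 5 * d / 2 := by simpa using hw
  have hfar : 2 * d ≤ dist y x₀ := by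
    linarith [dist_triangle (x₀ + w) y x₀, dist_comm y (x₀ + w)]
  refine ⟨fun hyΩ => by linarith [hnear y hyΩ], fun x hx => ?_⟩
  linarith [dist_triangle x x₀ y, hnear x hx, dist_comm x₀ y, dist_triangle y (x₀ + w) x₀]

section Energy

variable {N : ℕ} {p s : ℝ}

lemma energyIntegrand_nonneg (φ : Rn N → ℝ) (z : Rn N × Rn N) :
    0 ≤ energyIntegrand N p s φ z :=
  div_nonneg (Real.rpow_nonneg (abs_nonneg _) _) (Real.rpow_nonneg (norm_nonneg _) _)

lemma aemeasurable_sub_comp_fst_snd {φ : Rn N → ℝ} (hφ : AEStronglyMeasurable φ volume) :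
    AEMeasurable (fun z : Rn N × Rn N => φ z.1 - φ z.2) volume :=
  (hφ.comp_fst.sub hφ.comp_snd).aemeasurable

lemma measurable_norm_sub_rpow (e : ℝ) : Measurable fun z : Rn N × Rn N => ‖z.1 - z.2‖ ^ e :=
  (measurable_fst.sub measurable_snd).norm.pow_const e

lemma aestronglyMeasurable_energyIntegrand {φ : Rn N → ℝ}
    (hφ : AEStronglyMeasurable φ volume) :
    AEStronglyMeasurable (energyIntegrand N p s φ) volume :=
  ((measurable_id.abs.pow_const p).comp_aemeasurable (aemeasurable_sub_comp_fst_snd hφ)).div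
    (measurable_norm_sub_rpow _).aemeasurable |>.aestronglyMeasurable

lemma aestronglyMeasurable_gker {u φ : Rn N → ℝ} (hu : AEStronglyMeasurable u volume)
    (hφ : AEStronglyMeasurable φ volume) : AEStronglyMeasurable (gker N p s u φ) volume :=
  (((measurable_spow _).comp_aemeasurable (aemeasurable_sub_comp_fst_snd hu)).mul
    (aemeasurable_sub_comp_fst_snd hφ)).div
    (measurable_norm_sub_rpow _).aemeasurable |>.aestronglyMeasurable

variable {f : ℝ → ℝ}

lemma energyIntegrand_comp_le (hf : LipschitzWith 1 f) (hp : 0 ≤ p) (u : Rn N → ℝ)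
    (z : Rn N × Rn N) : energyIntegrand N p s (fun x => f (u x)) z ≤ energyIntegrand N p s u z :=
  div_le_div_of_nonneg_right (Real.rpow_le_rpow (abs_nonneg _) (hf.abs_sub_le _ _) hp)
    (Real.rpow_nonneg (norm_nonneg _) _)

lemma abs_gker_comp_le (hf : LipschitzWith 1 f) (hp : 1 < p) (u : Rn N → ℝ)
    (z : Rn N × Rn N) : |gker N p s u (fun x => f (u x)) z| ≤ energyIntegrand N p s u z := by
  rw [gker, energyIntegrand, abs_div, abs_of_nonneg (Real.rpow_nonneg (norm_nonneg _) _),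
    abs_mul, abs_spow _ (by linarith)]
  refine div_le_div_of_nonneg_right ?_ (Real.rpow_nonneg (norm_nonneg _) _)
  calc |u z.1 - u z.2| ^ (p - 1) * |f (u z.1) - f (u z.2)|
      ≤ |u z.1 - u z.2| ^ (p - 1) * |u z.1 - u z.2| :=
        mul_le_mul_of_nonneg_left (hf.abs_sub_le _ _) (Real.rpow_nonneg (abs_nonneg _) _)
    _ = |u z.1 - u z.2| ^ p := rpow_sub_one_mul_self (abs_nonneg _) (by linarith)

lemma gker_comp_nonneg (hf : Monotone f) (u : Rn N → ℝ) (z : Rn N × Rn N) :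
    0 ≤ gker N p s u (fun x => f (u x)) z :=
  div_nonneg (spow_mul_nonneg _ (hf.sub_mul_sub_nonneg _ _)) (Real.rpow_nonneg (norm_nonneg _) _)

lemma gker_neg (u φ : Rn N → ℝ) :
    gker N p s (fun x => -u x) φ = fun z => -gker N p s u φ z := by
  funext z
  simp only [gker, neg_sub_neg, ← neg_sub (u z.1), spow_neg, neg_mul, neg_div]

variable {Ω : Set (Rn N)} {u : Rn N → ℝ}

lemma memW0.comp (hu : memW0 N p s Ω u) (hf : LipschitzWith 1 f) (hf0 : f 0 = 0) (hp : 0 ≤ p) :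
    memW0 N p s Ω (fun x => f (u x)) := by
  obtain ⟨huLp, huE, hu0⟩ := hu
  have hmeas : AEStronglyMeasurable (fun x => f (u x)) volume :=
    hf.continuous.comp_aestronglyMeasurable huLp.1
  refine ⟨huLp.of_le hmeas (Eventually.of_forall fun x => ?_), huE.mono
    (aestronglyMeasurable_energyIntegrand hmeas) (Eventually.of_forall fun z => ?_), ?_⟩
  · simpa [hf0] using hf.abs_sub_le (u x) 0
  · rw [Real.norm_of_nonneg (energyIntegrand_nonneg _ _),
      Real.norm_of_nonneg (energyIntegrand_nonneg _ _)]
    exact energyIntegrand_comp_le hf hp u z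
  · filter_upwards [hu0] with x hx hxΩ
    rw [hx hxΩ, hf0]

lemma memW0.neg (hu : memW0 N p s Ω u) (hp : 0 ≤ p) : memW0 N p s Ω (fun x => -u x) :=
  hu.comp LipschitzWith.id.neg neg_zero hp

lemma memW0.integrable (hu : memW0 N p s Ω u) (hΩ : Bornology.IsBounded Ω) (hp : 1 ≤ p) :
    Integrable u := by
  have : IsFiniteMeasure (volume.restrict Ω) := isFiniteMeasure_restrict.mpr hΩ.measure_lt_top.ne
  exact IntegrableOn.integrable_of_ae_notMem_eq_zero
    ((hu.1.restrict Ω).integrable (ENNReal.one_le_ofReal.mpr hp)) hu.2.2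

lemma memW0.integrable_gker_comp (hu : memW0 N p s Ω u) (hf : LipschitzWith 1 f) (hp : 1 < p) :
    Integrable (gker N p s u fun x => f (u x)) :=
  hu.2.1.mono (aestronglyMeasurable_gker hu.1.1 (hf.continuous.comp_aestronglyMeasurable hu.1.1))
    (Eventually.of_forall fun z => by
      rw [Real.norm_eq_abs, Real.norm_of_nonneg (energyIntegrand_nonneg _ _)]
      exact abs_gker_comp_le hf hp u z)

lemma weakGE.neg {g : Rn N → ℝ} (h : weakGE N p s Ω u g) :
    weakLE N p s Ω (fun x => -u x) (fun x => -g x) := by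
  intro φ hφ hφ0
  have := h φ hφ hφ0
  simp only [gker_neg, neg_mul, integral_neg]
  linarith

lemma weakLE.integral_gker_le {K : ℝ} (hle : weakLE N p s Ω u fun _ => K) {φ : Rn N → ℝ}
    (hφ : memW0 N p s Ω φ) (hφ0 : ∀ᵐ x, 0 ≤ φ x) :
    ∫ z, gker N p s u φ z ≤ K * ∫ x, φ x := by
  have hφΩ : ∀ᵐ x, x ∉ Ω → K * φ x = 0 := by
    filter_upwards [hφ.2.2] with x hx hxΩ
    rw [hx hxΩ, mul_zero]
  simpa only [setIntegral_eq_integral_of_ae_compl_eq_zero hφΩ, integral_const_mul]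
    using hle φ hφ hφ0

end Energy

section LInfinityBound

variable {N : ℕ} {p s : ℝ} {u : Rn N → ℝ} {m : ℝ}

lemma le_gker_posPart_sub (hp : 1 < p) (he : 0 ≤ (N : ℝ) + p * s) (hm : 0 ≤ m) {R : ℝ}
    {x y : Rn N} (hy : u y = 0) (hxy : dist x y ≤ R) :
    m ^ (p - 1) * (u x - m)⁺ / R ^ ((N : ℝ) + p * s) ≤
      gker N p s u (fun x => (u x - m)⁺) (x, y) := by
  rcases le_or_gt (u x) m with hux | hux
  · rw [posPart_eq_zero.mpr (sub_nonpos.mpr hux), mul_zero, zero_div]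
    exact gker_comp_nonneg (monotone_posPart_sub m) u (x, y)
  have hxy0 : 0 < dist x y := dist_pos.mpr fun h => by simp only [h, hy] at hux; linarith
  have hgker : gker N p s u (fun x => (u x - m)⁺) (x, y) =
      u x ^ (p - 1) * (u x - m)⁺ / dist x y ^ ((N : ℝ) + p * s) := by
    rw [gker, hy, sub_zero, spow_of_nonneg (by linarith) (by linarith), zero_sub,
      posPart_eq_zero.mpr (neg_nonpos.mpr hm), sub_zero, dist_eq_norm]
  rw [hgker]
  exact div_le_div₀ (mul_nonneg (Real.rpow_nonneg (by linarith) _) (posPart_nonneg _))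
    (mul_le_mul_of_nonneg_right (Real.rpow_le_rpow hm hux.le (by linarith)) (posPart_nonneg _))
    (Real.rpow_pos_of_pos hxy0 _) (Real.rpow_le_rpow hxy0.le hxy he)

lemma integral_gker_posPart_sub_ge {Ω : Set (Rn N)} (hp : 1 < p) (he : 0 ≤ (N : ℝ) + p * s)
    (hu : memW0 N p s Ω u) (hm : 0 ≤ m) (hv : Integrable fun x => (u x - m)⁺) {B : Set (Rn N)}
    (hBm : MeasurableSet B) (hB : volume B ≠ ⊤) {R : ℝ}
    (hBΩ : ∀ y ∈ B, y ∉ Ω ∧ ∀ x ∈ Ω, dist x y ≤ R) :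
    m ^ (p - 1) * (volume B).toReal / R ^ ((N : ℝ) + p * s) * ∫ x, (u x - m)⁺ ≤
      ∫ z, gker N p s u (fun x => (u x - m)⁺) z := by
  set c := m ^ (p - 1) / R ^ ((N : ℝ) + p * s)
  have hF : ∫ z : Rn N × Rn N, c * ((u z.1 - m)⁺ * B.indicator 1 z.2) =
      m ^ (p - 1) * (volume B).toReal / R ^ ((N : ℝ) + p * s) * ∫ x, (u x - m)⁺ := by
    rw [integral_const_mul, Measure.volume_eq_prod,
      integral_prod_mul (fun x => (u x - m)⁺) (B.indicator 1), integral_indicator_one hBm]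
    simp only [c, measureReal_def]
    ring
  rw [← hF]
  have hu0 : ∀ᵐ z : Rn N × Rn N,
      (z.1 ∉ Ω → u z.1 = 0) ∧ (z.2 ∉ Ω → u z.2 = 0) := by
    rw [Measure.volume_eq_prod]
    exact (Measure.quasiMeasurePreserving_fst.ae hu.2.2).and
      (Measure.quasiMeasurePreserving_snd.ae hu.2.2)
  have hB1 : Integrable (B.indicator (1 : Rn N → ℝ)) :=
    (integrable_indicator_iff hBm).mpr (integrableOn_const hB)
  refine integral_mono_ae ((hv.mul_prod hB1).const_mul c)
    (hu.integrable_gker_comp (lipschitzWith_posPart_sub m) hp) ?_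
  filter_upwards [hu0] with z hz
  have hgker := gker_comp_nonneg (p := p) (s := s) (monotone_posPart_sub m) u z
  by_cases hz2 : z.2 ∈ B
  · by_cases hz1 : z.1 ∈ Ω
    · have := le_gker_posPart_sub hp he hm (hz.2 (hBΩ _ hz2).1) ((hBΩ _ hz2).2 _ hz1)
      simpa [indicator_of_mem hz2, c, mul_div_right_comm] using this
    · simpa [hz.1 hz1, posPart_eq_zero.mpr (neg_nonpos.mpr hm)] using hgker
  · simpa [indicator_of_notMem hz2] using hgker

/-- `(4 d)^{N+ps}` bounds the kernel on `Ω × B` and `|B_{d/2}| = |B|` for the ball `B` of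
`exists_ball_disjoint_within_dist`; the factor `2` makes the resulting lower bound
`2 K ∫ (u - m)⁺` for the pairing beat the upper bound `K ∫ (u - m)⁺`. -/
def linftyConst (N : ℕ) (p s d : ℝ) : ℝ :=
  2 * (4 * d) ^ ((N : ℝ) + p * s) / (volume (ball (0 : Rn N) (d / 2))).toReal

lemma toReal_volume_ball_pos {N : ℕ} (x : Rn N) {r : ℝ} (hr : 0 < r) :
    0 < (volume (ball x r)).toReal :=
  ENNReal.toReal_pos (measure_ball_pos volume x hr).ne' measure_ball_lt_top.ne

lemma linftyConst_pos (N : ℕ) (p s : ℝ) {d : ℝ} (hd : 0 < d) : 0 < linftyConst N p s d :=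
  div_pos (mul_pos two_pos (Real.rpow_pos_of_pos (by linarith) _))
    (toReal_volume_ball_pos 0 (by linarith))

lemma memW0.ae_le_of_weakLE (hN : 0 < N) (hp : 1 < p) (hs : 0 ≤ s) {d : ℝ} (hd : 0 < d)
    {Ω : Set (Rn N)} (hΩ : Bornology.IsBounded Ω) (hdiam : diam Ω ≤ d) {K : ℝ} (hK : 0 < K)
    (hu : memW0 N p s Ω u) (hle : weakLE N p s Ω u fun _ => K) :
    ∀ᵐ x, u x ≤ (linftyConst N p s d * K) ^ (1 / (p - 1)) := by
  have : Nonempty (Fin N) := ⟨⟨0, hN⟩⟩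
  set C := linftyConst N p s d
  set m := (C * K) ^ (1 / (p - 1))
  have hCK : 0 < C * K := mul_pos (linftyConst_pos N p s hd) hK
  have hm : 0 < m := Real.rpow_pos_of_pos hCK _
  have hmp : m ^ (p - 1) = C * K := by
    rw [← Real.rpow_mul hCK.le, one_div_mul_cancel (by linarith), Real.rpow_one]
  have hv : memW0 N p s Ω fun x => (u x - m)⁺ :=
    hu.comp (lipschitzWith_posPart_sub m) (by simp [hm.le]) (by linarith)
  have hvint := hv.integrable hΩ hp.le
  have hvnonneg : 0 ≤ ∫ x, (u x - m)⁺ := integral_nonneg fun _ => posPart_nonneg _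
  have hupper := hle.integral_gker_le hv (Eventually.of_forall fun _ => posPart_nonneg _)
  obtain ⟨c, hc⟩ := exists_ball_disjoint_within_dist hΩ hdiam hd
  have hlower := integral_gker_posPart_sub_ge hp (by positivity) hu hm.le hvint
    measurableSet_ball measure_ball_lt_top.ne hc
  have hcoeff : m ^ (p - 1) * (volume (ball c (d / 2))).toReal / (4 * d) ^ ((N : ℝ) + p * s) =
      2 * K := by
    have hball := toReal_volume_ball_pos (0 : Rn N) (half_pos hd)
    have hpow : 0 < (4 * d) ^ ((N : ℝ) + p * s) := Real.rpow_pos_of_pos (by linarith) _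
    rw [hmp, Measure.addHaar_ball_center]
    simp only [C, linftyConst]
    field_simp
  rw [hcoeff] at hlower
  refine ae_le_of_integral_posPart_sub_eq_zero hvint ?_
  nlinarith

end LInfinityBound

/-- Corollary 4.2, `L^∞` bound. -/
theorem statement13 (N : ℕ) (hN : 1 < N) (p s : ℝ) (hp : 1 < p) (hs : s ∈ Set.Ioo (0 : ℝ) 1)
    (d : ℝ) (hd : 0 < d) :
    ∃ C > (0 : ℝ), ∀ Ω : Set (Rn N), IsOpen Ω → Bornology.IsBounded Ω → Metric.diam Ω ≤ d →
      ∀ K : ℝ, 0 < K → ∀ u : Rn N → ℝ, memW0 N p s Ω u →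
        weakLE N p s Ω u (fun _ => K) → weakGE N p s Ω u (fun _ => -K) →
        ∀ᵐ x, |u x| ≤ (C * K) ^ (1 / (p - 1)) := by
  refine ⟨linftyConst N p s d, linftyConst_pos N p s hd, ?_⟩
  intro Ω _ hΩ hdiam K hK u hu hle hge
  have hN0 : 0 < N := by omega
  have hupper := hu.ae_le_of_weakLE hN0 hp hs.1.le hd hΩ hdiam hK hle
  have hlower := (hu.neg (by linarith)).ae_le_of_weakLE hN0 hp hs.1.le hd hΩ hdiam hK
    (by simpa using hge.neg)
  filter_upwards [hupper, hlower] with x hx hx'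
  exact abs_le.mpr ⟨by linarith, hx⟩
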